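/- arXiv:2007.13804 — 5 statements merged into one kernel-verified Lean document; each statement's English description precedes it below -/
import Mathlib

section
/- Let M be an m×m matrix function in the Wiener algebra on 𝕋 with det M(z) ≠ 0 for all z ∈ 𝕋, admitting a Wiener-Hopf factorization M = M₊ M₀ M₋ where M₊, M₊⁻¹ have absolutely summable Fourier coefficients supported on nonnegative powers of z, M₋, M₋⁻¹ likewise on nonpositive powers, and M₀ = diag(z^{κ₁},…,z^{κ_m}) with integers κ₁ ≥ ⋯ ≥ κ_m. If all partial indices κ_i are nonnegative, then the operator 𝐌 : (H₀)^m → (H₀)^m, 𝐌φ = P(Mφ | (H₀)^m), is surjective, and a right inverse is given by 𝐌₋⁻¹ 𝐌₀⁽⁻¹⁾ 𝐌₊⁻¹, where 𝐌₀⁽⁻¹⁾ is the diagonal operator with entries V^{(−κ_i)} (the κ_i-fold composition of φ ↦ z^{-1}φ). -/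
open MeasureTheory Filter Complex Topology
open scoped Real ENNReal

noncomputable section

instance : Fact (0 < 2 * Real.pi) := ⟨by positivity⟩

local notation "𝕋" => AddCircle (2 * Real.pi)

/-- The Hardy-type space `H₀` relative to a finite spectral measure on the circle. -/
def Hzero (μ : Measure 𝕋) [IsFiniteMeasure μ] : Submodule ℂ (Lp ℂ 2 μ) :=
  (Submodule.span ℂ
    (Set.range fun s : ℕ => ContinuousMap.toLp 2 μ ℂ (fourier (-(s : ℤ))))).topologicalClosure

instance (μ : Measure 𝕋) [IsFiniteMeasure μ] : CompleteSpace (Hzero μ) :=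
  (Submodule.isClosed_topologicalClosure _).completeSpace_coe

/-- The matrix symbol on the circle defined by a family of Fourier coefficients. -/
def symb (m : ℕ) (A : ℤ → Matrix (Fin m) (Fin m) ℂ) (x : 𝕋) :
    Matrix (Fin m) (Fin m) ℂ :=
  Matrix.of fun i j => ∑' s : ℤ, A s i j * fourier s x

/-!
Write `P` for the orthogonal projection onto `K = H₀`. Multiplication by `z ^ t` sends the
generator `z ^ (-s)` of `K` to `z ^ (t - s)`, so for `t ≤ 0` it preserves `K`, and, being adjoint
to multiplication by `z ^ (-t)`, for `t ≥ 0` it preserves `Kᗮ`. As a Wiener-algebra symbol is the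
uniform limit of its Fourier series, `M₋⁻¹` preserves `K` and `M₊` preserves `Kᗮ`.

Given `φ ∈ Kᵐ`, let `a = M₊⁻¹ φ`. Then `r = M₋⁻¹ z^(-κ) P a` already lies in `Kᵐ` (here `κ ≥ 0`),
so it equals `𝐌₋⁻¹ 𝐌₀⁽⁻¹⁾ 𝐌₊⁻¹ φ`, and
`M r = M₊ z^κ M₋ M₋⁻¹ z^(-κ) P a = M₊ P a = φ - M₊ (a - P a)` with `M₊ (a - P a) ∈ (Kᗮ)ᵐ`.
Hence `𝐌 r = P (M r) = φ`.
-/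

namespace MeasureTheory

lemma Lp.coeFn_finset_sum {α E ι : Type*} {_ : MeasurableSpace α} {μ : Measure α}
    [NormedAddCommGroup E] {p : ℝ≥0∞} (s : Finset ι) (f : ι → Lp E p μ) :
    ⇑(∑ i ∈ s, f i) =ᵐ[μ] ∑ i ∈ s, ⇑(f i) := by
  classical
  induction s using Finset.induction_on with
  | empty => simpa using Lp.coeFn_zero E p μ
  | insert i s hi ih =>
    simp only [Finset.sum_insert hi]
    exact (Lp.coeFn_add _ _).trans ih.add_left

variable {α : Type*} [TopologicalSpace α] [CompactSpace α] [MeasurableSpace α] [BorelSpace α]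
  [SecondCountableTopologyEither α ℂ] {μ : Measure α} [IsFiniteMeasure μ]

variable (μ) in
def mulL : C(α, ℂ) →L[ℂ] Lp ℂ 2 μ →L[ℂ] Lp ℂ 2 μ :=
  (ContinuousLinearMap.holderL μ ∞ 2 2 (ContinuousLinearMap.mul ℂ ℂ)).comp
    (ContinuousMap.toLp ∞ μ ℂ)

lemma coeFn_mulL (f : C(α, ℂ)) (g : Lp ℂ 2 μ) : mulL μ f g =ᵐ[μ] fun x => f x * g x := by
  filter_upwards [ContinuousLinearMap.coeFn_holder (r := 2) (ContinuousLinearMap.mul ℂ ℂ)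
    (ContinuousMap.toLp ∞ μ ℂ f) g, ContinuousMap.coeFn_toLp (p := ∞) (𝕜 := ℂ) μ f] with x h1 h2
  simp only [mulL, ContinuousLinearMap.comp_apply, ContinuousLinearMap.holderL_apply_apply]
  rw [h1, h2]
  rfl

lemma eq_mulL_of_ae {f : C(α, ℂ)} {u g : Lp ℂ 2 μ} (hg : g =ᵐ[μ] fun x => f x * u x) :
    g = mulL μ f u :=
  Lp.ext (hg.trans (coeFn_mulL f u).symm)

lemma mulL_mul (f g : C(α, ℂ)) (u : Lp ℂ 2 μ) : mulL μ (f * g) u = mulL μ f (mulL μ g u) := by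
  apply Lp.ext
  filter_upwards [coeFn_mulL (f * g) u, coeFn_mulL g u, coeFn_mulL f (mulL μ g u)] with x h1 h2 h3
  rw [h1, h3, h2, ContinuousMap.mul_apply, mul_assoc]

lemma mulL_one (u : Lp ℂ 2 μ) : mulL μ 1 u = u := by
  apply Lp.ext
  filter_upwards [coeFn_mulL 1 u] with x h
  rw [h, ContinuousMap.one_apply, one_mul]

lemma mulL_toLp (f g : C(α, ℂ)) :
    mulL μ f (ContinuousMap.toLp 2 μ ℂ g) = ContinuousMap.toLp 2 μ ℂ (f * g) := by
  apply Lp.ext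
  filter_upwards [coeFn_mulL f (ContinuousMap.toLp 2 μ ℂ g),
    ContinuousMap.coeFn_toLp (p := 2) (𝕜 := ℂ) μ g,
    ContinuousMap.coeFn_toLp (p := 2) (𝕜 := ℂ) μ (f * g)] with x h1 h2 h3
  rw [h1, h2, h3, ContinuousMap.mul_apply]

lemma inner_mulL (f : C(α, ℂ)) (u v : Lp ℂ 2 μ) :
    inner ℂ u (mulL μ f v) = inner ℂ (mulL μ (star f) u) v := by
  rw [L2.inner_def, L2.inner_def]
  apply integral_congr_ae
  filter_upwards [coeFn_mulL f v, coeFn_mulL (star f) u] with x h1 h2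
  simp only [h1, h2, RCLike.inner_apply, ContinuousMap.star_apply, map_mul, Complex.star_def,
    Complex.conj_conj]
  ring

lemma mulL_mem_of_hasSum {K : Submodule ℂ (Lp ℂ 2 μ)} (hK : IsClosed (K : Set (Lp ℂ 2 μ)))
    {ι : Type*} {c : ι → ℂ} {f : ι → C(α, ℂ)} {F : C(α, ℂ)} (hF : HasSum (fun t => c t • f t) F)
    {g : Lp ℂ 2 μ} (hg : ∀ t, c t ≠ 0 → mulL μ (f t) g ∈ K) : mulL μ F g ∈ K := by
  have hsum : HasSum (fun t => c t • mulL μ (f t) g) (mulL μ F g) := by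
    have := hF.mapL ((mulL μ).flip g)
    simp only [ContinuousLinearMap.flip_apply, map_smul] at this
    exact this
  refine hK.mem_of_tendsto hsum (Eventually.of_forall fun s => K.sum_mem fun t _ => ?_)
  by_cases ht : c t = 0
  · simp [ht]
  · exact K.smul_mem _ (hg t ht)

section Matrix

variable {ι : Type*} [Fintype ι]

variable (μ) in
def matMulₗ (F : Matrix ι ι C(α, ℂ)) : (ι → Lp ℂ 2 μ) →ₗ[ℂ] ι → Lp ℂ 2 μ :=
  LinearMap.pi fun i => ∑ j, (mulL μ (F i j)).toLinearMap ∘ₗ LinearMap.proj j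

lemma matMulₗ_apply (F : Matrix ι ι C(α, ℂ)) (u : ι → Lp ℂ 2 μ) (i : ι) :
    matMulₗ μ F u i = ∑ j, mulL μ (F i j) (u j) := by
  simp [matMulₗ]

lemma matMulₗ_mul (F G : Matrix ι ι C(α, ℂ)) (u : ι → Lp ℂ 2 μ) :
    matMulₗ μ (F * G) u = matMulₗ μ F (matMulₗ μ G u) := by
  ext1 i
  simp only [matMulₗ_apply, Matrix.mul_apply, map_sum, _root_.sum_apply, mulL_mul]
  exact Finset.sum_comm

lemma matMulₗ_diagonal [DecidableEq ι] (d : ι → C(α, ℂ)) (u : ι → Lp ℂ 2 μ) (i : ι) :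
    matMulₗ μ (Matrix.diagonal d) u i = mulL μ (d i) (u i) := by
  rw [matMulₗ_apply, Finset.sum_eq_single i (fun j _ hj => by simp [hj.symm]) (by simp),
    Matrix.diagonal_apply_eq]

lemma matMulₗ_one [DecidableEq ι] (u : ι → Lp ℂ 2 μ) : matMulₗ μ 1 u = u := by
  ext1 i
  rw [← Matrix.diagonal_one, matMulₗ_diagonal, mulL_one]

lemma eq_matMulₗ_apply_of_ae {F : Matrix ι ι C(α, ℂ)} {u : ι → Lp ℂ 2 μ} {i : ι} {g : Lp ℂ 2 μ}
    (hg : g =ᵐ[μ] fun x => ∑ j, F i j x * u j x) : g = matMulₗ μ F u i := by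
  rw [matMulₗ_apply]
  apply Lp.ext
  filter_upwards [hg, Lp.coeFn_finset_sum Finset.univ fun j => mulL μ (F i j) (u j),
    ae_all_iff.2 fun j => coeFn_mulL (F i j) (u j)] with x h1 h2 h3
  simp only [h1, h2, Finset.sum_apply, h3]

lemma matMulₗ_apply_mem {K : Submodule ℂ (Lp ℂ 2 μ)} {F : Matrix ι ι C(α, ℂ)}
    (hF : ∀ i j, ∀ g ∈ K, mulL μ (F i j) g ∈ K) {u : ι → Lp ℂ 2 μ} (hu : ∀ j, u j ∈ K) (i : ι) :
    matMulₗ μ F u i ∈ K := by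
  rw [matMulₗ_apply]
  exact K.sum_mem fun j _ => hF i j _ (hu j)

end Matrix

section RightInverse

variable {ι : Type*} [Fintype ι] {K : Submodule ℂ (Lp ℂ 2 μ)} [K.HasOrthogonalProjection]

lemma coe_eq_starProjection_matMulₗ {S : α → Matrix ι ι ℂ} {F : Matrix ι ι C(α, ℂ)}
    (hF : ∀ x i j, F i j x = S x i j) {u : ι → Lp ℂ 2 μ} {i : ι} {v : K}
    (h : ∃ g : Lp ℂ 2 μ, (⇑g =ᵐ[μ] fun x => ∑ j, S x i j * u j x) ∧
      v = K.orthogonalProjectionOnto g) :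
    (v : Lp ℂ 2 μ) = K.starProjection (matMulₗ μ F u i) := by
  obtain ⟨g, hg, rfl⟩ := h
  rw [← eq_matMulₗ_apply_of_ae (F := F) (g := g) (by simpa only [hF] using hg)]
  rfl

lemma coe_eq_starProjection_matMulₗ_diagonal [DecidableEq ι] {d : ι → C(α, ℂ)}
    {u : ι → Lp ℂ 2 μ} {i : ι} {v : K}
    (h : ∃ g : Lp ℂ 2 μ, (⇑g =ᵐ[μ] fun x => d i x * u i x) ∧ v = K.orthogonalProjectionOnto g) :
    (v : Lp ℂ 2 μ) = K.starProjection (matMulₗ μ (Matrix.diagonal d) u i) := by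
  obtain ⟨g, hg, rfl⟩ := h
  rw [matMulₗ_diagonal, ← eq_mulL_of_ae hg]
  rfl

theorem compression_rightInverse_of_factorization [DecidableEq ι]
    {Fc Fp Fpi F0 Fmi : Matrix ι ι C(α, ℂ)} (hFp : ∀ i j, ∀ g ∈ Kᗮ, mulL μ (Fp i j) g ∈ Kᗮ)
    (hF0 : ∀ i j, ∀ g ∈ K, mulL μ (F0 i j) g ∈ K) (hFmi : ∀ i j, ∀ g ∈ K, mulL μ (Fmi i j) g ∈ K)
    (hfact : Fc * Fmi * F0 = Fp) (hpinv : Fp * Fpi = 1) {Mop Bp B0 Bm : (ι → K) → ι → K}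
    (hMop : ∀ φ i, (Mop φ i : Lp ℂ 2 μ) = K.starProjection (matMulₗ μ Fc (fun j => φ j) i))
    (hBp : ∀ φ i, (Bp φ i : Lp ℂ 2 μ) = K.starProjection (matMulₗ μ Fpi (fun j => φ j) i))
    (hB0 : ∀ φ i, (B0 φ i : Lp ℂ 2 μ) = K.starProjection (matMulₗ μ F0 (fun j => φ j) i))
    (hBm : ∀ φ i, (Bm φ i : Lp ℂ 2 μ) = K.starProjection (matMulₗ μ Fmi (fun j => φ j) i)) :
    Function.RightInverse (fun φ => Bm (B0 (Bp φ))) Mop := by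
  intro φ
  set u : ι → Lp ℂ 2 μ := fun j => φ j
  set a := matMulₗ μ Fpi u with ha
  set p : ι → Lp ℂ 2 μ := fun i => K.starProjection (a i)
  set q := matMulₗ μ F0 p
  set r := matMulₗ μ Fmi q
  have hq : ∀ i, q i ∈ K := matMulₗ_apply_mem hF0 fun i => K.starProjection_apply_mem (a i)
  have hr : ∀ i, r i ∈ K := matMulₗ_apply_mem hFmi hq
  have hBp_eq : (fun j => (Bp φ j : Lp ℂ 2 μ)) = p := funext (hBp φ)
  have hB0_eq : (fun j => (B0 (Bp φ) j : Lp ℂ 2 μ)) = q := funext fun i => by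
    rw [hB0, hBp_eq, K.starProjection_eq_self_iff.2 (hq i)]
  have hBm_eq : (fun j => (Bm (B0 (Bp φ)) j : Lp ℂ 2 μ)) = r := funext fun i => by
    rw [hBm, hB0_eq, K.starProjection_eq_self_iff.2 (hr i)]
  have hMr : matMulₗ μ Fc r = u - matMulₗ μ Fp (a - p) := by
    calc matMulₗ μ Fc r = matMulₗ μ (Fc * Fmi * F0) p := by rw [matMulₗ_mul, matMulₗ_mul]
      _ = matMulₗ μ Fp a - matMulₗ μ Fp (a - p) := by rw [hfact, map_sub, sub_sub_cancel]
      _ = u - matMulₗ μ Fp (a - p) := by rw [ha, ← matMulₗ_mul, hpinv, matMulₗ_one]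
  have horth : ∀ i, matMulₗ μ Fp (a - p) i ∈ Kᗮ :=
    matMulₗ_apply_mem hFp fun i => K.sub_starProjection_mem_orthogonal (a i)
  ext i : 2
  rw [hMop, hBm_eq, hMr, Pi.sub_apply, map_sub, K.starProjection_eq_self_iff.2 (φ i).2,
    K.starProjection_apply_eq_zero_iff.2 (horth i), sub_zero]

end RightInverse

end MeasureTheory

section FourierSeries

variable {T : ℝ}

lemma fourier_mul_fourier (s t : ℤ) :
    fourier s * fourier t = (fourier (s + t) : C(AddCircle T, ℂ)) :=
  ContinuousMap.ext fun _ => fourier_add.symm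

lemma star_fourier (t : ℤ) : star (fourier t) = (fourier (-t) : C(AddCircle T, ℂ)) :=
  ContinuousMap.ext fun _ => fourier_neg.symm

variable [Fact (0 < T)]

def ofFourierCoeff (A : ℤ → ℂ) : C(AddCircle T, ℂ) := ∑' t, A t • fourier t

lemma hasSum_ofFourierCoeff {A : ℤ → ℂ} (hA : Summable fun t => ‖A t‖) :
    HasSum (fun t => A t • fourier t) (ofFourierCoeff (T := T) A) :=
  (hA.of_norm_bounded fun t => by rw [norm_smul, fourier_norm, mul_one]).hasSum

lemma ofFourierCoeff_apply {A : ℤ → ℂ} (hA : Summable fun t => ‖A t‖) (x : AddCircle T) :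
    ofFourierCoeff A x = ∑' t, A t * fourier t x :=
  ((hasSum_ofFourierCoeff hA).map (ContinuousMap.evalAlgHom ℂ ℂ x)
    (continuous_eval_const x)).tsum_eq.symm

end FourierSeries

section Hzero

variable {μ : Measure 𝕋} [IsFiniteMeasure μ]

lemma mulL_fourier_mem_Hzero {t : ℤ} (ht : t ≤ 0) {g : Lp ℂ 2 μ} (hg : g ∈ Hzero μ) :
    mulL μ (fourier t) g ∈ Hzero μ := by
  suffices Hzero μ ≤ (Hzero μ).comap (mulL μ (fourier t)).toLinearMap from this hg
  refine Submodule.topologicalClosure_minimal _ ?_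
    ((Submodule.isClosed_topologicalClosure _).preimage (mulL μ (fourier t)).continuous)
  rw [Submodule.span_le]
  rintro _ ⟨s, rfl⟩
  obtain ⟨n, hn⟩ : ∃ n : ℕ, t + -(s : ℤ) = -(n : ℤ) := ⟨s + t.natAbs, by omega⟩
  rw [SetLike.mem_coe, Submodule.mem_comap, ContinuousLinearMap.coe_coe, mulL_toLp,
    fourier_mul_fourier, hn]
  exact Submodule.le_topologicalClosure _ (Submodule.subset_span ⟨n, rfl⟩)

lemma mulL_fourier_mem_Hzero_orthogonal {t : ℤ} (ht : 0 ≤ t) {g : Lp ℂ 2 μ}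
    (hg : g ∈ (Hzero μ)ᗮ) : mulL μ (fourier t) g ∈ (Hzero μ)ᗮ := by
  refine (Submodule.mem_orthogonal _ _).2 fun v hv => ?_
  rw [inner_mulL, star_fourier]
  exact (Submodule.mem_orthogonal _ _).1 hg _ (mulL_fourier_mem_Hzero (neg_nonpos.2 ht) hv)

lemma mulL_ofFourierCoeff_mem_Hzero {A : ℤ → ℂ} (hA : Summable fun t => ‖A t‖)
    (hsupp : ∀ t, 0 < t → A t = 0) {g : Lp ℂ 2 μ} (hg : g ∈ Hzero μ) :
    mulL μ (ofFourierCoeff A) g ∈ Hzero μ :=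
  mulL_mem_of_hasSum (Submodule.isClosed_topologicalClosure _) (hasSum_ofFourierCoeff hA)
    fun t ht => mulL_fourier_mem_Hzero (not_lt.1 (mt (hsupp t) ht)) hg

lemma mulL_ofFourierCoeff_mem_Hzero_orthogonal {A : ℤ → ℂ} (hA : Summable fun t => ‖A t‖)
    (hsupp : ∀ t, t < 0 → A t = 0) {g : Lp ℂ 2 μ} (hg : g ∈ (Hzero μ)ᗮ) :
    mulL μ (ofFourierCoeff A) g ∈ (Hzero μ)ᗮ :=
  mulL_mem_of_hasSum (Submodule.isClosed_orthogonal _) (hasSum_ofFourierCoeff hA)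
    fun t ht => mulL_fourier_mem_Hzero_orthogonal (not_lt.1 (mt (hsupp t) ht)) hg

lemma mulL_diagonal_fourier_mem_Hzero {ι : Type*} [DecidableEq ι] {κ : ι → ℤ}
    (hκ : ∀ i, κ i ≤ 0) (i j : ι) {g : Lp ℂ 2 μ} (hg : g ∈ Hzero μ) :
    mulL μ (Matrix.diagonal (fun i => fourier (κ i)) i j) g ∈ Hzero μ := by
  rw [Matrix.diagonal_apply]
  split_ifs
  · exact mulL_fourier_mem_Hzero (hκ i) hg
  · simp

def symbolMatrix (m : ℕ) (A : ℤ → Matrix (Fin m) (Fin m) ℂ) : Matrix (Fin m) (Fin m) C(𝕋, ℂ) :=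
  Matrix.of fun i j => ofFourierCoeff fun s => A s i j

lemma mulL_symbolMatrix_mem_Hzero {m : ℕ} {A : ℤ → Matrix (Fin m) (Fin m) ℂ}
    (hA : ∀ i j, Summable fun s => ‖A s i j‖) (hsupp : ∀ s, 0 < s → A s = 0) (i j : Fin m)
    {g : Lp ℂ 2 μ} (hg : g ∈ Hzero μ) : mulL μ (symbolMatrix m A i j) g ∈ Hzero μ :=
  mulL_ofFourierCoeff_mem_Hzero (hA i j) (fun s hs => by simp [hsupp s hs]) hg

lemma mulL_symbolMatrix_mem_Hzero_orthogonal {m : ℕ} {A : ℤ → Matrix (Fin m) (Fin m) ℂ}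
    (hA : ∀ i j, Summable fun s => ‖A s i j‖) (hsupp : ∀ s, s < 0 → A s = 0) (i j : Fin m)
    {g : Lp ℂ 2 μ} (hg : g ∈ (Hzero μ)ᗮ) : mulL μ (symbolMatrix m A i j) g ∈ (Hzero μ)ᗮ :=
  mulL_ofFourierCoeff_mem_Hzero_orthogonal (hA i j) (fun s hs => by simp [hsupp s hs]) hg

end Hzero

lemma symbolMatrix_apply {m : ℕ} {A : ℤ → Matrix (Fin m) (Fin m) ℂ}
    (hA : ∀ i j, Summable fun s => ‖A s i j‖) (x : 𝕋) (i j : Fin m) :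
    symbolMatrix m A i j x = symb m A x i j :=
  ofFourierCoeff_apply (hA i j) x

lemma Matrix.ext_evalAlgHom {α ι : Type*} [TopologicalSpace α] [Fintype ι] [DecidableEq ι]
    {F G : Matrix ι ι C(α, ℂ)}
    (h : ∀ x, (ContinuousMap.evalAlgHom ℂ ℂ x).mapMatrix F =
      (ContinuousMap.evalAlgHom ℂ ℂ x).mapMatrix G) : F = G :=
  Matrix.ext fun i j => ContinuousMap.ext fun x => congrFun (congrFun (h x) i) j

lemma mapMatrix_evalAlgHom_symbolMatrix {m : ℕ} {A : ℤ → Matrix (Fin m) (Fin m) ℂ}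
    (hA : ∀ i j, Summable fun s => ‖A s i j‖) (x : 𝕋) :
    (ContinuousMap.evalAlgHom ℂ ℂ x).mapMatrix (symbolMatrix m A) = symb m A x :=
  Matrix.ext (symbolMatrix_apply hA x)

lemma symbolMatrix_mul_eq_one {m : ℕ} {A B : ℤ → Matrix (Fin m) (Fin m) ℂ}
    (hA : ∀ i j, Summable fun s => ‖A s i j‖) (hB : ∀ i j, Summable fun s => ‖B s i j‖)
    (h : ∀ x, symb m A x * symb m B x = 1) : symbolMatrix m A * symbolMatrix m B = 1 :=
  Matrix.ext_evalAlgHom fun x => by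
    rw [map_mul, map_one, mapMatrix_evalAlgHom_symbolMatrix hA,
      mapMatrix_evalAlgHom_symbolMatrix hB, h]

lemma symbolMatrix_mul_mul_diagonal_fourier_neg {m : ℕ}
    {A Ap Am Ami : ℤ → Matrix (Fin m) (Fin m) ℂ} {κ : Fin m → ℤ} (hA : ∀ i j, Summable fun s => ‖A s i j‖)
    (hAp : ∀ i j, Summable fun s => ‖Ap s i j‖) (hAmi : ∀ i j, Summable fun s => ‖Ami s i j‖)
    (hfact : ∀ x, symb m A x =
      symb m Ap x * (Matrix.diagonal fun i => fourier (κ i) x) * symb m Am x)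
    (hinv : ∀ x, symb m Am x * symb m Ami x = 1) :
    symbolMatrix m A * symbolMatrix m Ami * Matrix.diagonal (fun i => fourier (-κ i)) =
      symbolMatrix m Ap :=
  Matrix.ext_evalAlgHom fun x => by
    have hD : (Matrix.diagonal fun i => fourier (κ i) x) *
        Matrix.diagonal (fun i => fourier (-κ i) x) = 1 := by
      simp only [Matrix.diagonal_mul_diagonal, ← fourier_add, add_neg_cancel, fourier_zero,
        Matrix.diagonal_one]
    simp only [map_mul, mapMatrix_evalAlgHom_symbolMatrix hA,
      mapMatrix_evalAlgHom_symbolMatrix hAp, mapMatrix_evalAlgHom_symbolMatrix hAmi,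
      AlgHom.mapMatrix_apply, Matrix.diagonal_map (map_zero _), ContinuousMap.evalAlgHom_apply,
      hfact x, Matrix.mul_assoc]
    rw [← Matrix.mul_assoc (symb m Am x), hinv x, Matrix.one_mul, hD, Matrix.mul_one]

theorem wiener_hopf_right_inverse_general (μ : Measure 𝕋) [IsFiniteMeasure μ] (m : ℕ)
    (Mc Mpc Mpic Mmc Mmic : ℤ → Matrix (Fin m) (Fin m) ℂ) (κ : Fin m → ℤ)
    (hMc : ∀ i j, Summable fun s => ‖Mc s i j‖)
    (hMpc : ∀ i j, Summable fun s => ‖Mpc s i j‖)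
    (hMpic : ∀ i j, Summable fun s => ‖Mpic s i j‖)
    (hMmic : ∀ i j, Summable fun s => ‖Mmic s i j‖)
    (hp_supp : ∀ s : ℤ, s < 0 → Mpc s = 0)
    (hmi_supp : ∀ s : ℤ, 0 < s → Mmic s = 0)
    (hκ : ∀ i, 0 ≤ κ i)
    (hfact : ∀ x : 𝕋, symb m Mc x =
      symb m Mpc x * (Matrix.diagonal fun i => fourier (κ i) x) * symb m Mmc x)
    (hpinv : ∀ x : 𝕋,
      symb m Mpc x * symb m Mpic x = 1 ∧ symb m Mpic x * symb m Mpc x = 1)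
    (hminv : ∀ x : 𝕋,
      symb m Mmc x * symb m Mmic x = 1 ∧ symb m Mmic x * symb m Mmc x = 1)
    (Mop Bp B0 Bm : (Fin m → Hzero μ) →L[ℂ] (Fin m → Hzero μ))
    (hMop : ∀ φ i, ∃ g : Lp ℂ 2 μ,
      (⇑g =ᵐ[μ] fun x => ∑ j, symb m Mc x i j * (φ j : Lp ℂ 2 μ) x) ∧
      Mop φ i = (Hzero μ).orthogonalProjectionOnto g)
    (hBp : ∀ φ i, ∃ g : Lp ℂ 2 μ,
      (⇑g =ᵐ[μ] fun x => ∑ j, symb m Mpic x i j * (φ j : Lp ℂ 2 μ) x) ∧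
      Bp φ i = (Hzero μ).orthogonalProjectionOnto g)
    (hB0 : ∀ φ i, ∃ g : Lp ℂ 2 μ,
      (⇑g =ᵐ[μ] fun x => fourier (-(κ i)) x * (φ i : Lp ℂ 2 μ) x) ∧
      B0 φ i = (Hzero μ).orthogonalProjectionOnto g)
    (hBm : ∀ φ i, ∃ g : Lp ℂ 2 μ,
      (⇑g =ᵐ[μ] fun x => ∑ j, symb m Mmic x i j * (φ j : Lp ℂ 2 μ) x) ∧
      Bm φ i = (Hzero μ).orthogonalProjectionOnto g) :
    (∀ φ : Fin m → Hzero μ, Mop (Bm (B0 (Bp φ))) = φ) ∧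
    Function.Surjective ⇑Mop := by
  have key : Function.RightInverse (fun φ => Bm (B0 (Bp φ))) Mop :=
    compression_rightInverse_of_factorization
      (fun i j _ => mulL_symbolMatrix_mem_Hzero_orthogonal hMpc hp_supp i j)
      (fun i j _ => mulL_diagonal_fourier_mem_Hzero (fun i => neg_nonpos.2 (hκ i)) i j)
      (fun i j _ => mulL_symbolMatrix_mem_Hzero hMmic hmi_supp i j)
      (symbolMatrix_mul_mul_diagonal_fourier_neg hMc hMpc hMmic hfact fun x => (hminv x).1)
      (symbolMatrix_mul_eq_one hMpc hMpic fun x => (hpinv x).1)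
      (fun φ i => coe_eq_starProjection_matMulₗ (symbolMatrix_apply hMc) (hMop φ i))
      (fun φ i => coe_eq_starProjection_matMulₗ (symbolMatrix_apply hMpic) (hBp φ i))
      (fun φ i => coe_eq_starProjection_matMulₗ_diagonal (hB0 φ i))
      (fun φ i => coe_eq_starProjection_matMulₗ (symbolMatrix_apply hMmic) (hBm φ i))
  exact ⟨key, key.surjective⟩

/-- Wiener-Hopf factorization with nonnegative partial indices: `𝐌` is surjective on
`H₀^m` with right inverse `𝐌₋⁻¹ 𝐌₀⁽⁻¹⁾ 𝐌₊⁻¹`. -/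
theorem wiener_hopf_right_inverse (μ : Measure 𝕋) [IsFiniteMeasure μ] (m : ℕ)
    (Mc Mpc Mpic Mmc Mmic : ℤ → Matrix (Fin m) (Fin m) ℂ) (κ : Fin m → ℤ)
    (hMc : ∀ i j, Summable fun s => ‖Mc s i j‖)
    (hMpc : ∀ i j, Summable fun s => ‖Mpc s i j‖)
    (hMpic : ∀ i j, Summable fun s => ‖Mpic s i j‖)
    (hMmc : ∀ i j, Summable fun s => ‖Mmc s i j‖)
    (hMmic : ∀ i j, Summable fun s => ‖Mmic s i j‖)
    (hp_supp : ∀ s : ℤ, s < 0 → Mpc s = 0)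
    (hpi_supp : ∀ s : ℤ, s < 0 → Mpic s = 0)
    (hm_supp : ∀ s : ℤ, 0 < s → Mmc s = 0)
    (hmi_supp : ∀ s : ℤ, 0 < s → Mmic s = 0)
    (hdet : ∀ x : 𝕋, (symb m Mc x).det ≠ 0)
    (hord : ∀ i j : Fin m, i ≤ j → κ j ≤ κ i)
    (hκ : ∀ i, 0 ≤ κ i)
    (hfact : ∀ x : 𝕋, symb m Mc x =
      symb m Mpc x * (Matrix.diagonal fun i => fourier (κ i) x) * symb m Mmc x)
    (hpinv : ∀ x : 𝕋,
      symb m Mpc x * symb m Mpic x = 1 ∧ symb m Mpic x * symb m Mpc x = 1)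
    (hminv : ∀ x : 𝕋,
      symb m Mmc x * symb m Mmic x = 1 ∧ symb m Mmic x * symb m Mmc x = 1)
    (Mop Bp B0 Bm : (Fin m → Hzero μ) →L[ℂ] (Fin m → Hzero μ))
    (hMop : ∀ φ i, ∃ g : Lp ℂ 2 μ,
      (⇑g =ᵐ[μ] fun x => ∑ j, symb m Mc x i j * (φ j : Lp ℂ 2 μ) x) ∧
      Mop φ i = (Hzero μ).orthogonalProjectionOnto g)
    (hBp : ∀ φ i, ∃ g : Lp ℂ 2 μ,
      (⇑g =ᵐ[μ] fun x => ∑ j, symb m Mpic x i j * (φ j : Lp ℂ 2 μ) x) ∧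
      Bp φ i = (Hzero μ).orthogonalProjectionOnto g)
    (hB0 : ∀ φ i, ∃ g : Lp ℂ 2 μ,
      (⇑g =ᵐ[μ] fun x => fourier (-(κ i)) x * (φ i : Lp ℂ 2 μ) x) ∧
      B0 φ i = (Hzero μ).orthogonalProjectionOnto g)
    (hBm : ∀ φ i, ∃ g : Lp ℂ 2 μ,
      (⇑g =ᵐ[μ] fun x => ∑ j, symb m Mmic x i j * (φ j : Lp ℂ 2 μ) x) ∧
      Bm φ i = (Hzero μ).orthogonalProjectionOnto g) :
    (∀ φ : Fin m → Hzero μ, Mop (Bm (B0 (Bp φ))) = φ) ∧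
    Function.Surjective ⇑Mop :=
  wiener_hopf_right_inverse_general μ m Mc Mpc Mpic Mmc Mmic κ hMc hMpc hMpic hMmic hp_supp hmi_supp
    hκ hfact hpinv hminv Mop Bp B0 Bm hMop hBp hB0 hBm
end
end

section
/- Under the hypotheses of the previous statement (Wiener-Hopf factorization with all partial indices zero, so M₀ = I), the operator 𝐌φ = P(Mφ | (H₀)^m) is invertible, with inverse 𝐌₋⁻¹ 𝐌₊⁻¹. -/
open MeasureTheory Filter Complex Topology
open scoped Real ENNReal

noncomputable section

local notation "𝕋" => AddCircle (2 * Real.pi)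

/-!
For a continuous matrix symbol `N` the operator `𝐍 = P N` on `(H₀)^m` is
`compression (Hzero μ) (matMulL2 μ N)`. Symbols with nonpositive Fourier support map `(H₀)^m`
into itself and, taking adjoints, symbols with nonnegative Fourier support map `(H₀ᗮ)^m` into
itself. Hence the compression of `F G` is `𝐅 𝐆` as soon as `G` is co-analytic or `F` is analytic,
which gives `𝐌 𝐌₋⁻¹ 𝐌₊⁻¹ = 𝐌₊ 𝐌₊⁻¹ = 1` and `𝐌₋⁻¹ 𝐌₊⁻¹ 𝐌 = 𝐌₋⁻¹ 𝐌₋ = 1`.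
-/

section Compression

variable {𝕜 E ι : Type*} [RCLike 𝕜] [NormedAddCommGroup E] [InnerProductSpace 𝕜 E]
  (K : Submodule 𝕜 E) [K.HasOrthogonalProjection]

def compression (A : Module.End 𝕜 (ι → E)) (φ : ι → K) : ι → K :=
  fun i => K.orthogonalProjectionOnto (A (fun j => φ j) i)

variable {K}

theorem compression_one (φ : ι → K) : compression K 1 φ = φ :=
  funext fun i => K.orthogonalProjectionOnto_mem_subspace_eq_self (φ i)

theorem coe_compression_of_mem {A : Module.End 𝕜 (ι → E)} {φ : ι → K}
    (h : ∀ i, A (fun j => φ j) i ∈ K) (i : ι) :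
    (compression K A φ i : E) = A (fun j => φ j) i :=
  congrArg Subtype.val (K.orthogonalProjectionOnto_mem_subspace_eq_self ⟨_, h i⟩)

theorem compression_compression_of_mapsTo {A B : Module.End 𝕜 (ι → E)}
    (hB : ∀ ψ, (∀ i, ψ i ∈ K) → ∀ i, B ψ i ∈ K) (φ : ι → K) :
    compression K A (compression K B φ) = compression K (A * B) φ := by
  have hBφ : (fun j => (compression K B φ j : E)) = B (fun j => φ j) :=
    funext (coe_compression_of_mem (hB _ fun j => (φ j).2))
  funext i
  rw [compression, hBφ]
  rfl

theorem compression_compression_of_mapsTo_orthogonal {A B : Module.End 𝕜 (ι → E)}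
    (hA : ∀ ψ, (∀ i, ψ i ∈ Kᗮ) → ∀ i, A ψ i ∈ Kᗮ) (φ : ι → K) :
    compression K A (compression K B φ) = compression K (A * B) φ := by
  funext i
  have hdiff : A (B (fun j => φ j)) i - A (fun j => compression K B φ j) i ∈ Kᗮ := by
    rw [← Pi.sub_apply, ← map_sub]
    exact hA _ (fun j => K.sub_starProjection_mem_orthogonal _) i
  rw [compression, compression, Module.End.mul_apply, eq_comm, ← sub_eq_zero, ← map_sub]
  exact K.orthogonalProjectionOnto_apply_of_mem_orthogonal hdiff

end Compression

section MulL2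

variable {X : Type*} [TopologicalSpace X] [CompactSpace X] [MeasurableSpace X] [BorelSpace X]
  {μ : Measure X} [IsFiniteMeasure μ]

variable (μ) in
def mulL2 : C(X, ℂ) →L[ℂ] Lp ℂ 2 μ →L[ℂ] Lp ℂ 2 μ :=
  ((ContinuousLinearMap.mul ℂ ℂ).holderL μ ∞ 2 2).comp (ContinuousMap.toLp ∞ μ ℂ)

theorem coeFn_mulL2 (f : C(X, ℂ)) (g : Lp ℂ 2 μ) :
    mulL2 μ f g =ᵐ[μ] fun x => f x * g x := by
  filter_upwards [ContinuousLinearMap.coeFn_holder (r := 2) (ContinuousLinearMap.mul ℂ ℂ)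
    (ContinuousMap.toLp ∞ μ ℂ f) g, ContinuousMap.coeFn_toLp (p := ∞) μ (𝕜 := ℂ) f] with x h1 h2
  rw [← h2]
  exact h1

theorem mulL2_mul (f g : C(X, ℂ)) : mulL2 μ (f * g) = mulL2 μ f * mulL2 μ g := by
  refine ContinuousLinearMap.ext fun h => Lp.ext ?_
  rw [mul_apply_eq_comp]
  filter_upwards [coeFn_mulL2 (f * g) h, coeFn_mulL2 f (mulL2 μ g h), coeFn_mulL2 g h]
    with x h1 h2 h3
  rw [h1, h2, h3, ContinuousMap.mul_apply, mul_assoc]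

theorem mulL2_one : mulL2 μ (1 : C(X, ℂ)) = 1 := by
  refine ContinuousLinearMap.ext fun h => Lp.ext ?_
  rw [one_apply_eq_self]
  filter_upwards [coeFn_mulL2 1 h] with x h1
  rw [h1, ContinuousMap.one_apply, one_mul]

theorem mulL2_toLp (f g : C(X, ℂ)) :
    mulL2 μ f (ContinuousMap.toLp 2 μ ℂ g) = ContinuousMap.toLp 2 μ ℂ (f * g) := by
  refine Lp.ext ?_
  filter_upwards [coeFn_mulL2 f (ContinuousMap.toLp 2 μ ℂ g),
    ContinuousMap.coeFn_toLp (p := 2) μ (𝕜 := ℂ) g,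
    ContinuousMap.coeFn_toLp (p := 2) μ (𝕜 := ℂ) (f * g)] with x h1 h2 h3
  rw [h1, h2, h3, ContinuousMap.mul_apply]

theorem adjoint_mulL2 (f : C(X, ℂ)) : (mulL2 μ f).adjoint = mulL2 μ (star f) := by
  refine ((ContinuousLinearMap.eq_adjoint_iff _ _).2 fun g h => ?_).symm
  rw [MeasureTheory.L2.inner_def, MeasureTheory.L2.inner_def]
  refine integral_congr_ae ?_
  filter_upwards [coeFn_mulL2 f h, coeFn_mulL2 (star f) g] with x h1 h2
  simp only [h1, h2, RCLike.inner_apply, ContinuousMap.star_apply, Complex.star_def, map_mul,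
    Complex.conj_conj]
  ring

end MulL2

theorem MeasureTheory.Lp.coeFn_finset_sum_s9 {α E ι : Type*} {m : MeasurableSpace α} {μ : Measure α}
    {p : ℝ≥0∞} [NormedAddCommGroup E] (s : Finset ι) (F : ι → Lp E p μ) :
    ⇑(∑ i ∈ s, F i) =ᵐ[μ] fun x => ∑ i ∈ s, F i x := by
  classical
  induction s using Finset.induction with
  | empty =>
    simp only [Finset.sum_empty]
    exact Lp.coeFn_zero E p μ
  | insert a s ha ih =>
    filter_upwards [Lp.coeFn_add (F a) (∑ i ∈ s, F i), ih] with x hadd hs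
    rw [Finset.sum_insert ha, Finset.sum_insert ha, hadd, Pi.add_apply, hs]

section MatMulL2

variable {X : Type*} [TopologicalSpace X] [CompactSpace X] [MeasurableSpace X] [BorelSpace X]
  {μ : Measure X} [IsFiniteMeasure μ] {ι : Type*} [Fintype ι]

variable (μ) in
def matMulL2 (F : Matrix ι ι C(X, ℂ)) : Module.End ℂ (ι → Lp ℂ 2 μ) :=
  LinearMap.pi fun i => ∑ j, (mulL2 μ (F i j)).toLinearMap ∘ₗ LinearMap.proj j

theorem matMulL2_apply (F : Matrix ι ι C(X, ℂ)) (ψ : ι → Lp ℂ 2 μ) (i : ι) :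
    matMulL2 μ F ψ i = ∑ j, mulL2 μ (F i j) (ψ j) := by
  simp [matMulL2]

theorem matMulL2_mul (F G : Matrix ι ι C(X, ℂ)) :
    matMulL2 μ (F * G) = matMulL2 μ F * matMulL2 μ G := by
  refine LinearMap.ext fun ψ => funext fun i => ?_
  simp only [Module.End.mul_apply, matMulL2_apply, Matrix.mul_apply, map_sum,
    FunLike.coe_sum, Finset.sum_apply, mulL2_mul, mul_apply_eq_comp]
  exact Finset.sum_comm

theorem matMulL2_one [DecidableEq ι] : matMulL2 μ (1 : Matrix ι ι C(X, ℂ)) = 1 := by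
  refine LinearMap.ext fun ψ => funext fun i => ?_
  rw [matMulL2_apply, Finset.sum_eq_single i (fun j _ hj => by simp [Matrix.one_apply_ne hj.symm])
    (by simp), Matrix.one_apply_eq, mulL2_one, one_apply_eq_self, Module.End.one_apply]

theorem eq_matMulL2_apply_of_ae_eq (F : Matrix ι ι C(X, ℂ)) (ψ : ι → Lp ℂ 2 μ) (i : ι)
    {g : Lp ℂ 2 μ} (hg : g =ᵐ[μ] fun x => ∑ j, F i j x * ψ j x) :
    g = matMulL2 μ F ψ i := by
  refine Lp.ext (hg.trans ?_)
  have hterms : ∀ᵐ x ∂μ, ∀ j, mulL2 μ (F i j) (ψ j) x = F i j x * ψ j x :=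
    ae_all_iff.2 fun j => coeFn_mulL2 _ _
  filter_upwards [hterms, Lp.coeFn_finset_sum_s9 Finset.univ fun j => mulL2 μ (F i j) (ψ j)]
    with x hx hsum
  rw [matMulL2_apply, hsum]
  exact Finset.sum_congr rfl fun j _ => (hx j).symm

theorem eq_compression_matMulL2 (K : Submodule ℂ (Lp ℂ 2 μ)) [K.HasOrthogonalProjection]
    (F : Matrix ι ι C(X, ℂ)) {S : X → Matrix ι ι ℂ} (hS : ∀ x i j, F i j x = S x i j)
    {T : (ι → K) → (ι → K)}
    (hT : ∀ φ i, ∃ g : Lp ℂ 2 μ, (⇑g =ᵐ[μ] fun x => ∑ j, S x i j * (φ j : Lp ℂ 2 μ) x) ∧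
      T φ i = K.orthogonalProjectionOnto g) :
    T = compression K (matMulL2 μ F) := by
  funext φ i
  obtain ⟨g, hg, hTφ⟩ := hT φ i
  simp only [← hS] at hg
  rw [hTφ, eq_matMulL2_apply_of_ae_eq F _ i hg]
  rfl

end MatMulL2

section WienerAlgebra

open scoped ComplexConjugate

variable {T : ℝ} [Fact (0 < T)]

def wienerFun (c : ℤ → ℂ) : C(AddCircle T, ℂ) := ∑' s, c s • fourier s

theorem star_wienerFun (c : ℤ → ℂ) :
    star (wienerFun c : C(AddCircle T, ℂ)) = wienerFun fun s => conj (c (-s)) := by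
  rw [wienerFun, tsum_star, wienerFun, ← (Equiv.neg ℤ).tsum_eq]
  congr 1; funext s; ext x
  simp

variable {c : ℤ → ℂ}

theorem summable_smul_fourier (hc : Summable fun s => ‖c s‖) :
    Summable fun s => c s • (fourier s : C(AddCircle T, ℂ)) :=
  Summable.of_norm (by simpa [norm_smul, fourier_norm] using hc)

theorem wienerFun_apply (hc : Summable fun s => ‖c s‖) (x : AddCircle T) :
    wienerFun c x = ∑' s, c s * fourier s x := by
  simpa [wienerFun, ContinuousMap.evalCLM] using
    (ContinuousMap.evalCLM ℂ x).map_tsum (summable_smul_fourier (T := T) hc)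

end WienerAlgebra

section Hardy

variable {μ : Measure 𝕋} [IsFiniteMeasure μ]

theorem toLp_fourier_mem_Hzero {s : ℤ} (hs : s ≤ 0) :
    ContinuousMap.toLp 2 μ ℂ (fourier s) ∈ Hzero μ :=
  Submodule.le_topologicalClosure _ <| Submodule.subset_span
    ⟨(-s).toNat, by simp only [Int.toNat_of_nonneg (neg_nonneg.2 hs), neg_neg]⟩

theorem mulL2_fourier_mem_Hzero {s : ℤ} (hs : s ≤ 0) {φ : Lp ℂ 2 μ} (hφ : φ ∈ Hzero μ) :
    mulL2 μ (fourier s) φ ∈ Hzero μ := by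
  let L : Lp ℂ 2 μ →ₗ[ℂ] Lp ℂ 2 μ := mulL2 μ (fourier s)
  have hclosed : IsClosed ((Hzero μ).comap L : Set (Lp ℂ 2 μ)) :=
    (Submodule.isClosed_topologicalClosure _).preimage (mulL2 μ _).continuous
  refine Submodule.topologicalClosure_minimal _ ?_ hclosed hφ
  rw [Submodule.span_le]
  rintro _ ⟨n, rfl⟩
  have hprod : fourier s * fourier (-(n : ℤ)) = (fourier (s - n) : C(𝕋, ℂ)) := by
    ext x; rw [ContinuousMap.mul_apply, ← fourier_add, sub_eq_add_neg]
  rw [SetLike.mem_coe, Submodule.mem_comap, ContinuousLinearMap.coe_coe, mulL2_toLp, hprod]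
  exact toLp_fourier_mem_Hzero (by omega)

variable {c : ℤ → ℂ}

theorem mulL2_wienerFun_mem_Hzero (hc : Summable fun s => ‖c s‖)
    (hsupp : ∀ s, 0 < s → c s = 0) {φ : Lp ℂ 2 μ} (hφ : φ ∈ Hzero μ) :
    mulL2 μ (wienerFun c) φ ∈ Hzero μ := by
  have hsum := ((ContinuousLinearMap.apply ℂ _ φ).comp (mulL2 μ)).map_tsum
    (summable_smul_fourier hc)
  simp only [ContinuousLinearMap.comp_apply, ContinuousLinearMap.apply_apply] at hsum
  rw [wienerFun, hsum]
  refine tsum_mem (s := Hzero μ) (Submodule.isClosed_topologicalClosure _) fun s => ?_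
  rcases le_or_gt s 0 with hs | hs
  · simpa using (Hzero μ).smul_mem (c s) (mulL2_fourier_mem_Hzero hs hφ)
  · simp [hsupp s hs]

theorem mulL2_wienerFun_mem_orthogonal (hc : Summable fun s => ‖c s‖)
    (hsupp : ∀ s, s < 0 → c s = 0) {r : Lp ℂ 2 μ} (hr : r ∈ (Hzero μ)ᗮ) :
    mulL2 μ (wienerFun c) r ∈ (Hzero μ)ᗮ := by
  refine ((Hzero μ).mem_orthogonal _).2 fun u hu => ?_
  rw [← ContinuousLinearMap.adjoint_inner_left, adjoint_mulL2, star_wienerFun]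
  refine hr _ (mulL2_wienerFun_mem_Hzero ?_ (fun s hs => by simp [hsupp (-s) (by omega)]) hu)
  simpa only [Complex.norm_conj, Function.comp_def] using hc.comp_injective neg_injective

end Hardy

section WienerMatrix

variable {ι : Type*} [Fintype ι]

def wienerMatrix (N : ℤ → Matrix ι ι ℂ) : Matrix ι ι C(𝕋, ℂ) :=
  Matrix.of fun i j => wienerFun fun s => N s i j

theorem wienerMatrix_apply_apply {m : ℕ} {N : ℤ → Matrix (Fin m) (Fin m) ℂ}
    (hN : ∀ i j, Summable fun s => ‖N s i j‖) (x : 𝕋) (i j : Fin m) :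
    wienerMatrix N i j x = symb m N x i j :=
  wienerFun_apply (hN i j) x

theorem wienerMatrix_mul_apply_apply {m : ℕ} {A B : ℤ → Matrix (Fin m) (Fin m) ℂ}
    (hA : ∀ i j, Summable fun s => ‖A s i j‖) (hB : ∀ i j, Summable fun s => ‖B s i j‖)
    (x : 𝕋) (i j : Fin m) :
    (wienerMatrix A * wienerMatrix B) i j x = (symb m A x * symb m B x) i j := by
  simp only [Matrix.mul_apply, ContinuousMap.sum_apply, ContinuousMap.mul_apply,
    wienerMatrix_apply_apply hA, wienerMatrix_apply_apply hB]

theorem wienerMatrix_mul_eq_one {m : ℕ} {A B : ℤ → Matrix (Fin m) (Fin m) ℂ}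
    (hA : ∀ i j, Summable fun s => ‖A s i j‖) (hB : ∀ i j, Summable fun s => ‖B s i j‖)
    (hAB : ∀ x, symb m A x * symb m B x = 1) :
    wienerMatrix A * wienerMatrix B = 1 := by
  ext i j x
  rw [wienerMatrix_mul_apply_apply hA hB, hAB, Matrix.one_apply, Matrix.one_apply]
  split_ifs <;> rfl

theorem matMulL2_wienerMatrix_mul_eq_one {μ : Measure 𝕋} [IsFiniteMeasure μ] {m : ℕ}
    {A B : ℤ → Matrix (Fin m) (Fin m) ℂ}
    (hA : ∀ i j, Summable fun s => ‖A s i j‖) (hB : ∀ i j, Summable fun s => ‖B s i j‖)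
    (hAB : ∀ x, symb m A x * symb m B x = 1) :
    matMulL2 μ (wienerMatrix A) * matMulL2 μ (wienerMatrix B) = 1 := by
  rw [← matMulL2_mul, wienerMatrix_mul_eq_one hA hB hAB, matMulL2_one]

variable {μ : Measure 𝕋} [IsFiniteMeasure μ] {N : ℤ → Matrix ι ι ℂ}

theorem matMulL2_wienerMatrix_mem_Hzero (hN : ∀ i j, Summable fun s => ‖N s i j‖)
    (hsupp : ∀ s, 0 < s → N s = 0) {ψ : ι → Lp ℂ 2 μ} (hψ : ∀ i, ψ i ∈ Hzero μ) (i : ι) :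
    matMulL2 μ (wienerMatrix N) ψ i ∈ Hzero μ := by
  rw [matMulL2_apply]
  exact Submodule.sum_mem _ fun j _ =>
    mulL2_wienerFun_mem_Hzero (hN i j) (fun s hs => by simp [hsupp s hs]) (hψ j)

theorem matMulL2_wienerMatrix_mem_orthogonal (hN : ∀ i j, Summable fun s => ‖N s i j‖)
    (hsupp : ∀ s, s < 0 → N s = 0) {ψ : ι → Lp ℂ 2 μ} (hψ : ∀ i, ψ i ∈ (Hzero μ)ᗮ) (i : ι) :
    matMulL2 μ (wienerMatrix N) ψ i ∈ (Hzero μ)ᗮ := by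
  rw [matMulL2_apply]
  exact Submodule.sum_mem _ fun j _ =>
    mulL2_wienerFun_mem_orthogonal (hN i j) (fun s hs => by simp [hsupp s hs]) (hψ j)

end WienerMatrix

theorem wiener_hopf_inverse_zero_indices_general (μ : Measure 𝕋) [IsFiniteMeasure μ] (m : ℕ)
    (Mc Mpc Mpic Mmc Mmic : ℤ → Matrix (Fin m) (Fin m) ℂ)
    (hMpc : ∀ i j, Summable fun s => ‖Mpc s i j‖)
    (hMpic : ∀ i j, Summable fun s => ‖Mpic s i j‖)
    (hMmc : ∀ i j, Summable fun s => ‖Mmc s i j‖)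
    (hMmic : ∀ i j, Summable fun s => ‖Mmic s i j‖)
    (hp_supp : ∀ s : ℤ, s < 0 → Mpc s = 0)
    (hpi_supp : ∀ s : ℤ, s < 0 → Mpic s = 0)
    (hm_supp : ∀ s : ℤ, 0 < s → Mmc s = 0)
    (hmi_supp : ∀ s : ℤ, 0 < s → Mmic s = 0)
    (hfact : ∀ x : 𝕋, symb m Mc x = symb m Mpc x * symb m Mmc x)
    (hpinv : ∀ x : 𝕋,
      symb m Mpc x * symb m Mpic x = 1 ∧ symb m Mpic x * symb m Mpc x = 1)
    (hminv : ∀ x : 𝕋,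
      symb m Mmc x * symb m Mmic x = 1 ∧ symb m Mmic x * symb m Mmc x = 1)
    (Mop Bp Bm : (Fin m → Hzero μ) →L[ℂ] (Fin m → Hzero μ))
    (hMop : ∀ φ i, ∃ g : Lp ℂ 2 μ,
      (⇑g =ᵐ[μ] fun x => ∑ j, symb m Mc x i j * (φ j : Lp ℂ 2 μ) x) ∧
      Mop φ i = Submodule.orthogonalProjectionOnto (Hzero μ) g)
    (hBp : ∀ φ i, ∃ g : Lp ℂ 2 μ,
      (⇑g =ᵐ[μ] fun x => ∑ j, symb m Mpic x i j * (φ j : Lp ℂ 2 μ) x) ∧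
      Bp φ i = Submodule.orthogonalProjectionOnto (Hzero μ) g)
    (hBm : ∀ φ i, ∃ g : Lp ℂ 2 μ,
      (⇑g =ᵐ[μ] fun x => ∑ j, symb m Mmic x i j * (φ j : Lp ℂ 2 μ) x) ∧
      Bm φ i = Submodule.orthogonalProjectionOnto (Hzero μ) g) :
    (∀ φ : Fin m → Hzero μ, Mop (Bm (Bp φ)) = φ) ∧
    (∀ φ : Fin m → Hzero μ, Bm (Bp (Mop φ)) = φ) ∧
    Function.Bijective ⇑Mop := by
  set Ap := matMulL2 μ (wienerMatrix Mpc)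
  set Api := matMulL2 μ (wienerMatrix Mpic)
  set Am := matMulL2 μ (wienerMatrix Mmc)
  set Ami := matMulL2 μ (wienerMatrix Mmic)
  have hMop' : ⇑Mop = compression (Hzero μ) (Ap * Am) := by
    rw [← matMulL2_mul]
    exact eq_compression_matMulL2 _ _
      (fun x i j => by rw [wienerMatrix_mul_apply_apply hMpc hMmc, hfact]) hMop
  have hBp' : ⇑Bp = compression (Hzero μ) Api :=
    eq_compression_matMulL2 _ _ (wienerMatrix_apply_apply hMpic) hBp
  have hBm' : ⇑Bm = compression (Hzero μ) Ami :=
    eq_compression_matMulL2 _ _ (wienerMatrix_apply_apply hMmic) hBm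
  have hAp : Ap * Api = 1 := matMulL2_wienerMatrix_mul_eq_one hMpc hMpic fun x => (hpinv x).1
  have hApi : Api * Ap = 1 := matMulL2_wienerMatrix_mul_eq_one hMpic hMpc fun x => (hpinv x).2
  have hAm : Am * Ami = 1 := matMulL2_wienerMatrix_mul_eq_one hMmc hMmic fun x => (hminv x).1
  have hAmi : Ami * Am = 1 := matMulL2_wienerMatrix_mul_eq_one hMmic hMmc fun x => (hminv x).2
  have right_inv (φ : Fin m → Hzero μ) : Mop (Bm (Bp φ)) = φ := by
    rw [hMop', hBp', hBm',
      compression_compression_of_mapsTo fun _ => matMulL2_wienerMatrix_mem_Hzero hMmic hmi_supp,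
      mul_assoc, hAm, mul_one, compression_compression_of_mapsTo_orthogonal
        fun _ => matMulL2_wienerMatrix_mem_orthogonal hMpc hp_supp, hAp, compression_one]
  have left_inv (φ : Fin m → Hzero μ) : Bm (Bp (Mop φ)) = φ := by
    rw [hMop', hBp', hBm', compression_compression_of_mapsTo_orthogonal (A := Api)
        fun _ => matMulL2_wienerMatrix_mem_orthogonal hMpic hpi_supp,
      ← mul_assoc, hApi, one_mul,
      compression_compression_of_mapsTo fun _ => matMulL2_wienerMatrix_mem_Hzero hMmc hm_supp,
      hAmi, compression_one]
  exact ⟨right_inv, left_inv,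
    Function.bijective_iff_has_inverse.2 ⟨fun ψ => Bm (Bp ψ), left_inv, right_inv⟩⟩

/-- Wiener-Hopf factorization with all partial indices zero: `𝐌` is invertible with
inverse `𝐌₋⁻¹ 𝐌₊⁻¹`. -/
theorem wiener_hopf_inverse_zero_indices (μ : Measure 𝕋) [IsFiniteMeasure μ] (m : ℕ)
    (Mc Mpc Mpic Mmc Mmic : ℤ → Matrix (Fin m) (Fin m) ℂ)
    (hMc : ∀ i j, Summable fun s => ‖Mc s i j‖)
    (hMpc : ∀ i j, Summable fun s => ‖Mpc s i j‖)
    (hMpic : ∀ i j, Summable fun s => ‖Mpic s i j‖)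
    (hMmc : ∀ i j, Summable fun s => ‖Mmc s i j‖)
    (hMmic : ∀ i j, Summable fun s => ‖Mmic s i j‖)
    (hp_supp : ∀ s : ℤ, s < 0 → Mpc s = 0)
    (hpi_supp : ∀ s : ℤ, s < 0 → Mpic s = 0)
    (hm_supp : ∀ s : ℤ, 0 < s → Mmc s = 0)
    (hmi_supp : ∀ s : ℤ, 0 < s → Mmic s = 0)
    (hdet : ∀ x : 𝕋, (symb m Mc x).det ≠ 0)
    (hfact : ∀ x : 𝕋, symb m Mc x = symb m Mpc x * symb m Mmc x)
    (hpinv : ∀ x : 𝕋,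
      symb m Mpc x * symb m Mpic x = 1 ∧ symb m Mpic x * symb m Mpc x = 1)
    (hminv : ∀ x : 𝕋,
      symb m Mmc x * symb m Mmic x = 1 ∧ symb m Mmic x * symb m Mmc x = 1)
    (Mop Bp Bm : (Fin m → Hzero μ) →L[ℂ] (Fin m → Hzero μ))
    (hMop : ∀ φ i, ∃ g : Lp ℂ 2 μ,
      (⇑g =ᵐ[μ] fun x => ∑ j, symb m Mc x i j * (φ j : Lp ℂ 2 μ) x) ∧
      Mop φ i = Submodule.orthogonalProjectionOnto (Hzero μ) g)
    (hBp : ∀ φ i, ∃ g : Lp ℂ 2 μ,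
      (⇑g =ᵐ[μ] fun x => ∑ j, symb m Mpic x i j * (φ j : Lp ℂ 2 μ) x) ∧
      Bp φ i = Submodule.orthogonalProjectionOnto (Hzero μ) g)
    (hBm : ∀ φ i, ∃ g : Lp ℂ 2 μ,
      (⇑g =ᵐ[μ] fun x => ∑ j, symb m Mmic x i j * (φ j : Lp ℂ 2 μ) x) ∧
      Bm φ i = Submodule.orthogonalProjectionOnto (Hzero μ) g) :
    (∀ φ : Fin m → Hzero μ, Mop (Bm (Bp φ)) = φ) ∧
    (∀ φ : Fin m → Hzero μ, Bm (Bp (Mop φ)) = φ) ∧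
    Function.Bijective ⇑Mop :=
  wiener_hopf_inverse_zero_indices_general μ m Mc Mpc Mpic Mmc Mmic hMpc hMpic hMmc hMmic hp_supp
    hpi_supp hm_supp hmi_supp hfact hpinv hminv Mop Bp Bm hMop hBp hBm
end
end

section
/- Let M be an m×m matrix function continuous on 𝕋, w ∈ 𝕋 with det M(w) = 0, and φ ∈ ℂ^m with rank [ M(w) φ ] = m (full row rank of the augmented matrix; here φ is the value at w of the right-hand side). Take F = δ_w I_n, the Dirac measure at w. Then there is no ψ ∈ (H₀)^m with P(Mψ | (H₀)^m) = φ in L²(𝕋,F)^m. That is, the LREM has no solution for this spectral measure. -/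
open MeasureTheory Filter Complex Topology
open scoped Real ENNReal

noncomputable section

local notation "𝕋" => AddCircle (2 * Real.pi)

/-!
Against `δ_w`, every element of `L²` is a multiple of the constant `z⁰ = 1`, so `H₀` is the whole
space and the projection is the identity. Evaluating at `w`, the equation becomes the linear
system `M(w) u = φ` with `u = ψ(w)`, which is unsolvable when `M(w)` is singular and `[M(w) φ]`
has full row rank.
-/

namespace Matrix

variable {K m n : Type*} [Field K] [Fintype m]

theorem vecMul_injective_of_rank_eq_card [Fintype n] {A : Matrix m n K}
    (h : A.rank = Fintype.card m) : Function.Injective A.vecMul := by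
  rw [vecMul_injective_iff, linearIndependent_iff_card_eq_finrank_span, ← h,
    rank_eq_finrank_span_row, Set.finrank]

/-- A left null vector `v` of the singular `A` is orthogonal to every `A u`, but the full row rank
of `[A b]` forbids `v ⬝ b = 0`. -/
theorem not_exists_mulVec_eq_of_det_eq_zero [DecidableEq m] {A : Matrix m m K} {b : m → K}
    (hdet : A.det = 0)
    (hrank : (fromCols A (of fun i (_ : Fin 1) => b i)).rank = Fintype.card m) :
    ¬ ∃ u, A *ᵥ u = b := by
  rintro ⟨u, rfl⟩
  obtain ⟨v, hv, hvA⟩ := exists_vecMul_eq_zero_iff.mpr hdet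
  refine hv (vecMul_injective_of_rank_eq_card hrank ?_)
  simp only [zero_vecMul]
  have hvAu : v ⬝ᵥ (A *ᵥ u) = 0 := by rw [dotProduct_mulVec, hvA, zero_dotProduct]
  ext (j | j)
  · simp [hvA]
  · simpa [vecMul, dotProduct] using hvAu

end Matrix

theorem eventuallyEq_dirac_iff {α β : Type*} [MeasurableSpace α] [MeasurableSingletonClass α]
    (a : α) {f g : α → β} : f =ᵐ[Measure.dirac a] g ↔ f a = g a := by
  rw [EventuallyEq, ae_dirac_eq, eventually_pure]

theorem Hzero_dirac_eq_top (w : 𝕋) : Hzero (Measure.dirac w) = ⊤ := by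
  rw [Submodule.eq_top_iff']
  intro f
  apply Submodule.le_topologicalClosure
  set e₀ : Lp ℂ 2 (Measure.dirac w) := ContinuousMap.toLp 2 _ ℂ (fourier (-((0 : ℕ) : ℤ)))
  have he₀ : e₀ w = 1 := by
    rw [(eventuallyEq_dirac_iff w).mp (ContinuousMap.coeFn_toLp _ _)]
    simp
  have hf : f = f w • e₀ := by
    refine Lp.ext ((eventuallyEq_dirac_iff w).mpr ?_)
    rw [(eventuallyEq_dirac_iff w).mp (Lp.coeFn_smul (f w) e₀), Pi.smul_apply, he₀, smul_eq_mul,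
      mul_one]
  rw [hf]
  exact Submodule.smul_mem _ _ (Submodule.subset_span ⟨0, rfl⟩)

theorem no_solution_unit_circle_zero_general (m : ℕ) (w : 𝕋)
    (M : 𝕋 → Matrix (Fin m) (Fin m) ℂ)
    (φv : Fin m → ℂ)
    (hdet : (M w).det = 0)
    (hrank : (Matrix.fromCols (M w) (Matrix.of fun i (_ : Fin 1) => φv i)).rank = m) :
    ¬ ∃ ψ : Fin m → Hzero (Measure.dirac w), ∀ i, ∃ g : Lp ℂ 2 (Measure.dirac w),
      (⇑g =ᵐ[Measure.dirac w]
        fun x => ∑ j, M x i j * (ψ j : Lp ℂ 2 (Measure.dirac w)) x) ∧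
      ⇑((Submodule.orthogonalProjectionOnto (Hzero (Measure.dirac w)) g :
          Hzero (Measure.dirac w)) : Lp ℂ 2 (Measure.dirac w)) =ᵐ[Measure.dirac w]
        fun _ => φv i := by
  rintro ⟨ψ, hψ⟩
  refine Matrix.not_exists_mulVec_eq_of_det_eq_zero hdet (by rwa [Fintype.card_fin])
    ⟨fun j => (ψ j : Lp ℂ 2 (Measure.dirac w)) w, funext fun i => ?_⟩
  obtain ⟨g, hg, hproj⟩ := hψ i
  have hg_mem : g ∈ Hzero (Measure.dirac w) := Hzero_dirac_eq_top w ▸ Submodule.mem_top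
  have hg_fixed : (Submodule.orthogonalProjectionOnto (Hzero (Measure.dirac w)) g :
      Lp ℂ 2 (Measure.dirac w)) = g := Submodule.starProjection_eq_self_iff.mpr hg_mem
  rw [hg_fixed] at hproj
  exact (eventuallyEq_dirac_iff w).mp (hg.symm.trans hproj)

/-- If `det M(w) = 0` at some `w ∈ 𝕋` while `[M(w) φ]` has full row rank `m`, then with
spectral measure `δ_w` the equation `P(Mψ | H₀^m) = φ` has no solution `ψ ∈ H₀^m`. -/
theorem no_solution_unit_circle_zero (m : ℕ) (w : 𝕋)
    (M : 𝕋 → Matrix (Fin m) (Fin m) ℂ)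
    (hMcont : ∀ i j, Continuous fun x => M x i j)
    (φv : Fin m → ℂ)
    (hdet : (M w).det = 0)
    (hrank : (Matrix.fromCols (M w) (Matrix.of fun i (_ : Fin 1) => φv i)).rank = m) :
    ¬ ∃ ψ : Fin m → Hzero (Measure.dirac w), ∀ i, ∃ g : Lp ℂ 2 (Measure.dirac w),
      (⇑g =ᵐ[Measure.dirac w]
        fun x => ∑ j, M x i j * (ψ j : Lp ℂ 2 (Measure.dirac w)) x) ∧
      ⇑((Submodule.orthogonalProjectionOnto (Hzero (Measure.dirac w)) g :
          Hzero (Measure.dirac w)) : Lp ℂ 2 (Measure.dirac w)) =ᵐ[Measure.dirac w]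
        fun _ => φv i :=
  no_solution_unit_circle_zero_general m w M φv hdet hrank
end
end

section
/- Let H, K, G be Hilbert spaces, 𝐌 : H → K a bounded surjective linear operator, and 𝐋 : H → G a bounded linear operator such that ker(𝐌) ∩ ker(𝐋) = {0} and the restriction 𝐋|_{ker(𝐌)} is bounded below (e.g., ker(𝐌) is finite dimensional). Then for every y ∈ K there exists a unique x ∈ H with 𝐌x = y minimizing ‖𝐋x‖ over the solution set {x : 𝐌x = y}. -/
/-! The solutions of `M x = y` are `x₀ + k` with `k ∈ ker M`, so the problem is to approximate
`-L x₀` by `L k`, `k ∈ ker M`. Since `L` is bounded below on the complete space `ker M`, it is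
injective there and `L (ker M)` is complete, so the orthogonal projection of `-L x₀` onto
`L (ker M)` is the unique best approximation and has a unique preimage. -/

theorem Submodule.existsUnique_norm_sub_le {𝕜 E : Type*} [RCLike 𝕜] [NormedAddCommGroup E]
    [InnerProductSpace 𝕜 E] (W : Submodule 𝕜 E) [W.HasOrthogonalProjection] (u : E) :
    ∃! w ∈ W, ∀ w' ∈ W, ‖u - w‖ ≤ ‖u - w'‖ := by
  have hbdd : BddBelow (Set.range fun w : W => ‖u - w‖) :=
    ⟨0, by rintro r ⟨w, rfl⟩; exact norm_nonneg _⟩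
  refine ⟨W.starProjection u, ⟨W.starProjection_apply_mem u, fun w' hw' => ?_⟩, ?_⟩
  · rw [starProjection_minimal]
    exact ciInf_le hbdd ⟨w', hw'⟩
  · rintro w ⟨hw, hmin⟩
    have hinf : ‖u - w‖ = ⨅ w' : W, ‖u - w'‖ :=
      le_antisymm (le_ciInf fun w' => hmin w' w'.2) (ciInf_le hbdd ⟨w, hw⟩)
    exact (eq_starProjection_of_mem_of_inner_eq_zero hw
      ((norm_eq_iInf_iff_inner_eq_zero W hw).mp hinf)).symm

theorem AntilipschitzWith.existsUnique_norm_add_apply_le {𝕜 E F : Type*} [RCLike 𝕜]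
    [NormedAddCommGroup E] [NormedSpace 𝕜 E] [CompleteSpace E]
    [NormedAddCommGroup F] [InnerProductSpace 𝕜 F] {f : E →L[𝕜] F} {C : NNReal}
    (hf : AntilipschitzWith C f) (v : F) :
    ∃! x, ∀ x', ‖v + f x‖ ≤ ‖v + f x'‖ := by
  set W := LinearMap.range (f : E →ₗ[𝕜] F)
  have : CompleteSpace W :=
    completeSpace_coe_iff_isComplete.mpr (hf.isComplete_range f.uniformContinuous)
  have hnorm : ∀ z, ‖-v - z‖ = ‖v + z‖ := fun z => by rw [← neg_add', norm_neg]
  obtain ⟨w, ⟨⟨x, rfl⟩, hmin⟩, huniq⟩ := W.existsUnique_norm_sub_le (-v)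
  refine ⟨x, fun x' => ?_, fun x' hx' => hf.injective ?_⟩
  · simpa only [hnorm, ContinuousLinearMap.coe_coe] using hmin (f x') ⟨x', rfl⟩
  · refine huniq (f x') ⟨⟨x', rfl⟩, ?_⟩
    rintro _ ⟨x'', rfl⟩
    simpa only [hnorm, ContinuousLinearMap.coe_coe] using hx' x''

theorem LinearMap.existsUnique_min_on_fiber_of_ker {R E F β : Type*} [Ring R]
    [AddCommGroup E] [Module R E] [AddCommGroup F] [Module R F] [Preorder β]
    (M : E →ₗ[R] F) {x₀ : E} {y : F} (hx₀ : M x₀ = y) (g : E → β)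
    (h : ∃! k : ker M, ∀ k' : ker M, g (x₀ + k) ≤ g (x₀ + k')) :
    ∃! x, M x = y ∧ ∀ x', M x' = y → g x ≤ g x' := by
  obtain ⟨k, hk, huniq⟩ := h
  have hsub : ∀ x', M x' = y → x' - x₀ ∈ ker M := fun x' hx' => by simp [hx', hx₀]
  refine ⟨x₀ + k, ⟨by simp [hx₀], fun x' hx' => ?_⟩, ?_⟩
  · simpa using hk ⟨x' - x₀, hsub x' hx'⟩
  · rintro x' ⟨hx', hmin⟩
    have hk' := huniq ⟨x' - x₀, hsub x' hx'⟩ fun k' => by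
      simpa using hmin (x₀ + k') (by simp [hx₀])
    rw [← hk']
    simp

theorem regularized_solution_exists_unique_general {H K G : Type*}
    [NormedAddCommGroup H] [InnerProductSpace ℂ H] [CompleteSpace H]
    [NormedAddCommGroup K] [InnerProductSpace ℂ K]
    [NormedAddCommGroup G] [InnerProductSpace ℂ G]
    (M : H →L[ℂ] K) (L : H →L[ℂ] G)
    (hM : Function.Surjective M)
    (hbb : ∃ c : ℝ, 0 < c ∧ ∀ x ∈ LinearMap.ker (M : H →ₗ[ℂ] K), c * ‖x‖ ≤ ‖L x‖) :
    ∀ y : K, ∃! x : H, M x = y ∧ ∀ x' : H, M x' = y → ‖L x‖ ≤ ‖L x'‖ := by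
  intro y
  obtain ⟨x₀, hx₀⟩ := hM y
  set N := LinearMap.ker (M : H →ₗ[ℂ] K)
  have : CompleteSpace N := M.isClosed_ker.completeSpace_coe
  obtain ⟨c, hc, hcN⟩ := hbb
  obtain ⟨C, hC⟩ : ∃ C, AntilipschitzWith C (L ∘L N.subtypeL) :=
    antilipschitzWith_iff_exists_mul_le_norm.mpr ⟨c, hc, fun k => hcN k k.2⟩
  apply (M : H →ₗ[ℂ] K).existsUnique_min_on_fiber_of_ker hx₀ (fun x => ‖L x‖)
  simpa only [map_add, ContinuousLinearMap.comp_apply, Submodule.subtypeL_apply] using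
    hC.existsUnique_norm_add_apply_le (L x₀)

/-- Regularized solutions: if `𝐌` is surjective, `ker 𝐌 ∩ ker 𝐋 = {0}`, and `𝐋` is bounded
below on `ker 𝐌`, then for every `y` there is a unique solution of `𝐌x = y` minimizing
`‖𝐋x‖` over the solution set. -/
theorem regularized_solution_exists_unique {H K G : Type*}
    [NormedAddCommGroup H] [InnerProductSpace ℂ H] [CompleteSpace H]
    [NormedAddCommGroup K] [InnerProductSpace ℂ K] [CompleteSpace K]
    [NormedAddCommGroup G] [InnerProductSpace ℂ G] [CompleteSpace G]
    (M : H →L[ℂ] K) (L : H →L[ℂ] G)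
    (hM : Function.Surjective M)
    (hker : LinearMap.ker (M : H →ₗ[ℂ] K) ⊓ LinearMap.ker (L : H →ₗ[ℂ] G) = ⊥)
    (hbb : ∃ c : ℝ, 0 < c ∧ ∀ x ∈ LinearMap.ker (M : H →ₗ[ℂ] K), c * ‖x‖ ≤ ‖L x‖) :
    ∀ y : K, ∃! x : H, M x = y ∧ ∀ x' : H, M x' = y → ‖L x‖ ≤ ‖L x'‖ :=
  regularized_solution_exists_unique_general M L hM hbb
end

section
/- Let H be a Hilbert space, 𝐌 : H → H bounded and surjective, 𝐋 : H → G bounded with ker(𝐌) ∩ ker(𝐋) = {0} and ker(𝐌) finite dimensional. Then the operator 𝐌*𝐌 + 𝐋*𝐋 is invertible on H, and the bilinear form [[x, y]] = ⟨𝐌x, 𝐌y⟩ + ⟨𝐋x, 𝐋y⟩ defines an inner product on H whose induced norm is equivalent to the original norm on H. -/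
/-!
By the open mapping theorem every `x` splits as `y + k` with `‖y‖ ≲ ‖M x‖` and `k ∈ ker M`.
On the finite-dimensional space `ker M` the map `L` is injective, hence bounded below, so
`‖x‖ ≲ ‖M x‖ + ‖L x‖`. Since `re ⟪(M* M + L* L) x, x⟫ = ‖M x‖² + ‖L x‖²`, the operator
`M* M + L* L` is coercive, hence invertible.
-/

theorem LinearMap.exists_norm_le_of_disjoint_ker {𝕜 E G : Type*} [NontriviallyNormedField 𝕜]
    [CompleteSpace 𝕜] [NormedAddCommGroup E] [NormedSpace 𝕜 E] [NormedAddCommGroup G]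
    [NormedSpace 𝕜 G] (L : E →ₗ[𝕜] G) {K : Submodule 𝕜 E} [FiniteDimensional 𝕜 K]
    (hK : Disjoint K (LinearMap.ker L)) : ∃ β : ℝ, 0 < β ∧ ∀ k ∈ K, ‖k‖ ≤ β * ‖L k‖ := by
  have hinj : LinearMap.ker (L.domRestrict K) = ⊥ := by
    rwa [LinearMap.ker_domRestrict, ← Submodule.disjoint_iff_comap_eq_bot]
  obtain ⟨β, hβ, hanti⟩ := (L.domRestrict K).exists_antilipschitzWith hinj
  exact ⟨β, hβ, fun k hk => by simpa using hanti.le_mul_dist ⟨k, hk⟩ 0⟩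

namespace ContinuousLinearMap

section Banach

variable {𝕜 E F G : Type*} [NontriviallyNormedField 𝕜] [CompleteSpace 𝕜]
  [NormedAddCommGroup E] [NormedSpace 𝕜 E] [CompleteSpace E]
  [NormedAddCommGroup F] [NormedSpace 𝕜 F] [CompleteSpace F]
  [NormedAddCommGroup G] [NormedSpace 𝕜 G]

theorem exists_norm_le_of_surjective_of_ker_inf_ker_eq_bot
    (M : E →L[𝕜] F) (L : E →L[𝕜] G) (hM : Function.Surjective M)
    (hker : LinearMap.ker (M : E →ₗ[𝕜] F) ⊓ LinearMap.ker (L : E →ₗ[𝕜] G) = ⊥)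
    [FiniteDimensional 𝕜 (LinearMap.ker (M : E →ₗ[𝕜] F))] :
    ∃ D : ℝ, 0 < D ∧ ∀ x, ‖x‖ ≤ D * (‖M x‖ + ‖L x‖) := by
  obtain ⟨C, hC, hpre⟩ := M.exists_preimage_norm_le hM
  obtain ⟨β, hβ, hL⟩ := (L : E →ₗ[𝕜] G).exists_norm_le_of_disjoint_ker (disjoint_iff.2 hker)
  refine ⟨C + β * ‖L‖ * C + β, by positivity, fun x => ?_⟩
  obtain ⟨y, hMy, hy⟩ := hpre (M x)
  have hxy : ‖x - y‖ ≤ β * (‖L x‖ + ‖L‖ * (C * ‖M x‖)) := calc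
    ‖x - y‖ ≤ β * ‖L (x - y)‖ := hL _ (by simp [hMy])
    _ ≤ β * (‖L x‖ + ‖L‖ * ‖y‖) := by
      gcongr
      calc ‖L (x - y)‖ ≤ ‖L x‖ + ‖L y‖ := by rw [map_sub]; exact norm_sub_le _ _
        _ ≤ ‖L x‖ + ‖L‖ * ‖y‖ := by gcongr; exact L.le_opNorm y
    _ ≤ β * (‖L x‖ + ‖L‖ * (C * ‖M x‖)) := by gcongr
  calc ‖x‖ ≤ ‖y‖ + ‖x - y‖ := norm_le_insert' x y
    _ ≤ C * ‖M x‖ + β * (‖L x‖ + ‖L‖ * (C * ‖M x‖)) := by gcongr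
    _ ≤ (C + β * ‖L‖ * C + β) * (‖M x‖ + ‖L x‖) := by
      have := norm_nonneg (M x); have := norm_nonneg (L x)
      have : 0 ≤ β * ‖L‖ * C := by positivity
      nlinarith

theorem exists_mul_sq_le_sq_add_sq_of_surjective_of_ker_inf_ker_eq_bot
    (M : E →L[𝕜] F) (L : E →L[𝕜] G) (hM : Function.Surjective M)
    (hker : LinearMap.ker (M : E →ₗ[𝕜] F) ⊓ LinearMap.ker (L : E →ₗ[𝕜] G) = ⊥)
    [FiniteDimensional 𝕜 (LinearMap.ker (M : E →ₗ[𝕜] F))] :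
    ∃ c : ℝ, 0 < c ∧ ∀ x, c * ‖x‖ ^ 2 ≤ ‖M x‖ ^ 2 + ‖L x‖ ^ 2 := by
  obtain ⟨D, hD, hbound⟩ := M.exists_norm_le_of_surjective_of_ker_inf_ker_eq_bot L hM hker
  refine ⟨(2 * D ^ 2)⁻¹, by positivity, fun x => ?_⟩
  rw [inv_mul_le_iff₀ (by positivity)]
  calc ‖x‖ ^ 2 ≤ (D * (‖M x‖ + ‖L x‖)) ^ 2 := by gcongr; exact hbound x
    _ ≤ 2 * D ^ 2 * (‖M x‖ ^ 2 + ‖L x‖ ^ 2) := by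
      nlinarith [sq_nonneg (‖M x‖ - ‖L x‖), sq_nonneg D]

end Banach

theorem norm_apply_sq_add_norm_apply_sq_le {𝕜 E F G : Type*}
    [NontriviallyNormedField 𝕜] [NormedAddCommGroup E] [NormedSpace 𝕜 E]
    [NormedAddCommGroup F] [NormedSpace 𝕜 F] [NormedAddCommGroup G] [NormedSpace 𝕜 G]
    (M : E →L[𝕜] F) (L : E →L[𝕜] G) (x : E) :
    ‖M x‖ ^ 2 + ‖L x‖ ^ 2 ≤ (‖M‖ ^ 2 + ‖L‖ ^ 2) * ‖x‖ ^ 2 := by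
  rw [add_mul, ← mul_pow, ← mul_pow]
  gcongr
  · exact M.le_opNorm x
  · exact L.le_opNorm x

section Hilbert

variable {𝕜 E F G : Type*} [RCLike 𝕜]
  [NormedAddCommGroup E] [InnerProductSpace 𝕜 E] [CompleteSpace E]
  [NormedAddCommGroup F] [InnerProductSpace 𝕜 F] [CompleteSpace F]
  [NormedAddCommGroup G] [InnerProductSpace 𝕜 G] [CompleteSpace G]

theorem re_inner_adjoint_comp_self_add_adjoint_comp_self_apply
    (M : E →L[𝕜] F) (L : E →L[𝕜] G) (x : E) :
    RCLike.re (inner 𝕜 ((adjoint M ∘L M + adjoint L ∘L L) x) x) = ‖M x‖ ^ 2 + ‖L x‖ ^ 2 := by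
  rw [add_apply, inner_add_left, map_add, apply_norm_sq_eq_inner_adjoint_left,
    apply_norm_sq_eq_inner_adjoint_left]

theorem isUnit_adjoint_comp_self_add_adjoint_comp_self
    (M : E →L[𝕜] F) (L : E →L[𝕜] G) {c : ℝ} (hc : 0 < c)
    (hcoer : ∀ x, c * ‖x‖ ^ 2 ≤ ‖M x‖ ^ 2 + ‖L x‖ ^ 2) :
    IsUnit (adjoint M ∘L M + adjoint L ∘L L) :=
  isUnit_of_forall_le_norm_inner_map _ (c := ⟨c, hc.le⟩) hc fun x => calc
    ‖x‖ ^ 2 * c ≤ ‖M x‖ ^ 2 + ‖L x‖ ^ 2 := by rw [mul_comm]; exact hcoer x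
    _ = RCLike.re (inner 𝕜 ((adjoint M ∘L M + adjoint L ∘L L) x) x) :=
      (M.re_inner_adjoint_comp_self_add_adjoint_comp_self_apply L x).symm
    _ ≤ _ := RCLike.re_le_norm _

end Hilbert

end ContinuousLinearMap

/-- If `𝐌` is surjective, `ker 𝐌 ∩ ker 𝐋 = {0}` and `ker 𝐌` is finite dimensional, then
`𝐌*𝐌 + 𝐋*𝐋` is invertible and `[[x,y]] = ⟨𝐌x,𝐌y⟩ + ⟨𝐋x,𝐋y⟩` induces a norm equivalent to
the original one. -/
theorem regularized_inner_product_equivalent {H G : Type*}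
    [NormedAddCommGroup H] [InnerProductSpace ℂ H] [CompleteSpace H]
    [NormedAddCommGroup G] [InnerProductSpace ℂ G] [CompleteSpace G]
    (M : H →L[ℂ] H) (L : H →L[ℂ] G)
    (hM : Function.Surjective M)
    (hker : LinearMap.ker (M : H →ₗ[ℂ] H) ⊓ LinearMap.ker (L : H →ₗ[ℂ] G) = ⊥)
    (hfd : FiniteDimensional ℂ (LinearMap.ker (M : H →ₗ[ℂ] H))) :
    (∃ T : H →L[ℂ] H,
      (ContinuousLinearMap.adjoint M ∘L M + ContinuousLinearMap.adjoint L ∘L L) ∘L T =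
        ContinuousLinearMap.id ℂ H ∧
      T ∘L (ContinuousLinearMap.adjoint M ∘L M + ContinuousLinearMap.adjoint L ∘L L) =
        ContinuousLinearMap.id ℂ H) ∧
    ∃ c C : ℝ, 0 < c ∧ 0 < C ∧ ∀ x : H,
      c * ‖x‖ ^ 2 ≤ ‖M x‖ ^ 2 + ‖L x‖ ^ 2 ∧ ‖M x‖ ^ 2 + ‖L x‖ ^ 2 ≤ C * ‖x‖ ^ 2 := by
  obtain ⟨c, hc, hcoer⟩ :=
    M.exists_mul_sq_le_sq_add_sq_of_surjective_of_ker_inf_ker_eq_bot L hM hker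
  obtain ⟨u, hu⟩ := M.isUnit_adjoint_comp_self_add_adjoint_comp_self L hc hcoer
  refine ⟨⟨↑u⁻¹, by rw [← hu]; exact u.mul_inv, by rw [← hu]; exact u.inv_mul⟩,
    c, ‖M‖ ^ 2 + ‖L‖ ^ 2 + 1, hc, by positivity, fun x => ⟨hcoer x, ?_⟩⟩
  calc ‖M x‖ ^ 2 + ‖L x‖ ^ 2 ≤ (‖M‖ ^ 2 + ‖L‖ ^ 2) * ‖x‖ ^ 2 :=
        M.norm_apply_sq_add_norm_apply_sq_le L x
    _ ≤ (‖M‖ ^ 2 + ‖L‖ ^ 2 + 1) * ‖x‖ ^ 2 := by gcongr ?_ * _; linarith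
end
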